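/- For m ≥ 2 and even t ≥ 0, the expected absolute length of a product of t independent uniformly random simple reflections in I_2(m) equals 2 - (1/2^{t-1}) ∑_{|k| ≤ ⌊t/(2m)⌋} C(t, t/2 - km); for odd t it equals 1. -/

import Mathlib

open Classical

/-- Minimal length of a word over `S` whose product is `w`. -/
noncomputable def wordLength {G : Type*} [Group G] (S : Set G) (w : G) : ℕ :=
  sInf {k | ∃ l : List G, l.length = k ∧ (∀ x ∈ l, x ∈ S) ∧ l.prod = w}

/-- The two Coxeter generators (simple reflections) of the dihedral group `I₂(m)`. -/
def dihedralGens (m : ℕ) : Set (DihedralGroup m) :=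
  {DihedralGroup.sr 0, DihedralGroup.sr 1}

/-- The set of reflections (conjugates of the generators) in `I₂(m)`. -/
def dihedralRefl (m : ℕ) : Set (DihedralGroup m) :=
  {w | ∃ g s, s ∈ dihedralGens m ∧ w = g * s * g⁻¹}

/-- Absolute length in the dihedral group `I₂(m)`. -/
noncomputable def dAbsLen (m : ℕ) (w : DihedralGroup m) : ℕ :=
  wordLength (dihedralRefl m) w

/-- A uniformly random choice from the two simple reflections, encoded by a boolean. -/
def dihedralGen (m : ℕ) (b : Bool) : DihedralGroup m :=
  if b then DihedralGroup.sr 1 else DihedralGroup.sr 0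

/-- Expected absolute length of a product of `t` independent uniformly random
simple reflections of `I₂(m)`. -/
noncomputable def dihedralExpAbsLenS (m t : ℕ) : ℝ :=
  (∑ f : Fin t → Bool, (dAbsLen m (List.ofFn (fun i => dihedralGen m (f i))).prod : ℝ)) / 2 ^ t


/-!
The reflections of `I₂(m)` are exactly the elements `sr j`, so the absolute length is `1` on
`sr j`, `0` on `1` and `2` on every other rotation `r j`. A product of simple reflections
`sr e₀ ⋯ sr e_{t-1}` (with `eᵢ ∈ {0, 1}`) is a reflection when `t` is odd. When `t = 2n` it is the
rotation by minus the alternating sum `∑ (-1)ⁱ eᵢ`. Flipping the bits in odd positions is a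
bijection from words to subsets `S ⊆ {0, …, 2n-1}`, and it turns that alternating sum into
`#S - n`. So the product is trivial exactly when `#S ≡ n (mod m)`, which happens for
`∑_{|k| ≤ n/m} C(2n, n - km)` words.
-/

open DihedralGroup Finset

section WordLength

variable {G : Type*} [Group G] {S : Set G}

theorem wordLength_le_length {l : List G} (hl : ∀ x ∈ l, x ∈ S) :
    wordLength S l.prod ≤ l.length :=
  Nat.sInf_le ⟨l, rfl, hl, rfl⟩

theorem exists_length_eq_wordLength {l : List G} (hl : ∀ x ∈ l, x ∈ S) :
    ∃ l' : List G, l'.length = wordLength S l.prod ∧ (∀ x ∈ l', x ∈ S) ∧ l'.prod = l.prod :=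
  Nat.sInf_mem (s := {k | ∃ l' : List G, l'.length = k ∧ (∀ x ∈ l', x ∈ S) ∧ l'.prod = l.prod})
    ⟨l.length, l, rfl, hl, rfl⟩

end WordLength

theorem List.alternatingSum_ofFn {R : Type*} [CommRing R] {t : ℕ} (c : Fin t → R) :
    (List.ofFn c).alternatingSum = ∑ i : Fin t, (-1) ^ (i : ℕ) * c i := by
  induction t with
  | zero => simp
  | succ t ih => simp [List.ofFn_succ, Fin.sum_univ_succ, ih, pow_succ, sub_eq_add_neg]

theorem Fin.sum_ite_odd_two_mul {R : Type*} [CommRing R] (n : ℕ) :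
    ∑ i : Fin (2 * n), (if Odd (i : ℕ) then (1 : R) else 0) = n := by
  rw [Fin.sum_univ_eq_sum_range (fun i => if Odd i then (1 : R) else 0)]
  induction n with
  | zero => simp
  | succ n ih =>
    rw [Nat.mul_succ, sum_range_succ, sum_range_succ, ih]
    simp [parity_simps]

theorem sum_bool_fun_alternatingSum {R M : Type*} [CommRing R] [AddCommMonoid M] (n : ℕ)
    (F : R → M) :
    ∑ f : Fin (2 * n) → Bool, F (List.ofFn fun i => ((f i).toNat : R)).alternatingSum =
      ∑ w ∈ range (2 * n + 1), (2 * n).choose w • F (w - n) := by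
  let flipOdd : Finset (Fin (2 * n)) ≃ (Fin (2 * n) → Bool) :=
    { toFun := fun S i => decide (i ∈ S) ^^ decide (Odd (i : ℕ))
      invFun := fun f => univ.filter fun i => f i ^^ decide (Odd (i : ℕ))
      left_inv := fun S => by ext; simp
      right_inv := fun f => by
        funext i; by_cases h : Odd (i : ℕ) <;> cases hf : f i <;> simp [h, hf] }
  have hflip : ∀ S, (List.ofFn fun i => ((flipOdd S i).toNat : R)).alternatingSum = #S - n := by
    intro S
    rw [List.alternatingSum_ofFn]
    calc ∑ i : Fin (2 * n), (-1) ^ (i : ℕ) * ((flipOdd S i).toNat : R)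
        = ∑ i : Fin (2 * n), ((if i ∈ S then 1 else 0) - if Odd (i : ℕ) then 1 else 0) := by
          refine sum_congr rfl fun i _ => ?_
          by_cases ho : Odd (i : ℕ)
          · by_cases hi : i ∈ S <;> simp [flipOdd, ho, ho.neg_one_pow, hi]
          · by_cases hi : i ∈ S <;>
              simp [flipOdd, ho, (Nat.not_odd_iff_even.mp ho).neg_one_pow, hi]
      _ = #S - n := by rw [sum_sub_distrib, sum_boole, Fin.sum_ite_odd_two_mul]; simp
  rw [← flipOdd.sum_comp]
  simp only [hflip]
  rw [← powerset_univ, sum_powerset_apply_card (fun k => F (k - n)), card_univ, Fintype.card_fin]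

theorem sum_choose_filter_dvd_sub {m : ℕ} (hm : 0 < m) (n : ℕ) :
    ∑ w ∈ (range (2 * n + 1)).filter (fun w : ℕ => (m : ℤ) ∣ w - n), (2 * n).choose w =
      ∑ k ∈ Icc (-((n / m : ℕ) : ℤ)) ((n / m : ℕ) : ℤ), (2 * n).choose ((n : ℤ) - k * m).toNat := by
  have hIcc : ∀ k : ℤ, k ∈ Icc (-((n / m : ℕ) : ℤ)) ((n / m : ℕ) : ℤ) ↔ |k * m| ≤ n := by
    intro k
    rw [mem_Icc, ← abs_le, Int.natCast_div, Int.le_ediv_iff_mul_le (by positivity), abs_mul,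
      Nat.abs_cast]
  symm
  refine sum_nbij' (fun k => ((n : ℤ) - k * m).toNat) (fun w => ((n : ℤ) - w) / m)
    ?_ ?_ ?_ ?_ (fun _ _ => rfl)
  · intro k hk
    have := abs_le.mp ((hIcc k).mp hk)
    simp only [mem_filter, mem_range]
    exact ⟨by omega, -k, by rw [Int.toNat_of_nonneg (by omega)]; ring⟩
  · intro w hw
    obtain ⟨hw, d, hd⟩ := mem_filter.mp hw
    rw [hIcc, show (n : ℤ) - w = m * -d by linarith, Int.mul_ediv_cancel_left _ (by positivity),
      abs_le]
    rw [mem_range] at hw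
    constructor <;> nlinarith
  · intro k hk
    have := abs_le.mp ((hIcc k).mp hk)
    rw [Int.toNat_of_nonneg (by omega), sub_sub_cancel, Int.mul_ediv_cancel _ (by omega)]
  · intro w hw
    obtain ⟨d, hd⟩ := (mem_filter.mp hw).2
    rw [show (n : ℤ) - w = m * -d by linarith, Int.mul_ediv_cancel_left _ (by omega),
      show (n : ℤ) - -d * m = w by linarith, Int.toNat_natCast]

section Dihedral

variable {m : ℕ}

theorem mem_dihedralRefl_iff {w : DihedralGroup m} : w ∈ dihedralRefl m ↔ ∃ j, w = sr j := by
  constructor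
  · rintro ⟨g, s, hs, rfl⟩
    rcases hs with rfl | rfl <;> rcases g with a | a <;> exact ⟨_, rfl⟩
  · rintro ⟨j, rfl⟩
    obtain ⟨z, rfl⟩ := ZMod.intCast_surjective j
    -- `r (-a) * sr s * r a = sr (s + 2a)`
    rcases Int.even_or_odd' z with ⟨a, rfl | rfl⟩
    · exact ⟨r (-a), sr 0, Or.inl rfl, by simp; ring⟩
    · exact ⟨r (-a), sr 1, Or.inr rfl, by simp; ring⟩

theorem dAbsLen_sr (j : ZMod m) : dAbsLen m (sr j) = 1 := by
  have hword : ∀ x ∈ [sr j], x ∈ dihedralRefl m := by simp [mem_dihedralRefl_iff]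
  have hle := wordLength_le_length hword
  obtain ⟨l, hlen, -, hprod⟩ := exists_length_eq_wordLength hword
  simp only [List.prod_singleton, List.length_singleton] at hle hlen hprod
  have hl : l ≠ [] := by rintro rfl; simp [one_def, -r_zero] at hprod
  have := List.length_pos_of_ne_nil hl
  rw [dAbsLen]; omega

theorem dAbsLen_r (j : ZMod m) : dAbsLen m (r j) = if j = 0 then 0 else 2 := by
  split_ifs with hj
  · subst hj
    simpa [dAbsLen] using wordLength_le_length (S := dihedralRefl m) (l := [])
  · have hword : ∀ x ∈ [sr 0, sr j], x ∈ dihedralRefl m := by simp [mem_dihedralRefl_iff]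
    have hle := wordLength_le_length hword
    obtain ⟨l, hlen, hrefl, hprod⟩ := exists_length_eq_wordLength hword
    simp only [List.prod_cons, List.prod_nil, mul_one, sr_mul_sr, sub_zero] at hle hlen hprod
    rw [dAbsLen]
    match l, hlen with
    | [], _ => simp [one_def, -r_zero, eq_comm, hj] at hprod
    | [x], _ =>
      obtain ⟨i, rfl⟩ := mem_dihedralRefl_iff.mp (hrefl x (by simp))
      simp at hprod
    | _ :: _ :: _, hlen => simp at hle hlen; omega

theorem prod_map_sr (l : List (ZMod m)) :
    (l.map sr).prod = if Even l.length then r (-l.alternatingSum) else sr l.alternatingSum := by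
  induction l with
  | nil => simp [one_def, -r_zero]
  | cons a l ih =>
    simp only [List.map_cons, List.prod_cons, ih, List.alternatingSum_cons, List.length_cons,
      Nat.even_add_one]
    split_ifs <;> simp [sub_eq_add_neg]

theorem prod_ofFn_dihedralGen {t : ℕ} (f : Fin t → Bool) :
    (List.ofFn fun i => dihedralGen m (f i)).prod =
      if Even t then r (-(List.ofFn fun i => ((f i).toNat : ZMod m)).alternatingSum)
      else sr (List.ofFn fun i => ((f i).toNat : ZMod m)).alternatingSum := by
  have hgen : ∀ b, dihedralGen m b = sr (b.toNat : ZMod m) := by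
    intro b; cases b <;> simp [dihedralGen]
  have hmap : (List.ofFn fun i => sr ((f i).toNat : ZMod m)) =
      (List.ofFn fun i => ((f i).toNat : ZMod m)).map sr := List.map_ofFn.symm
  simp only [hgen]
  rw [hmap, prod_map_sr, List.length_ofFn]

theorem sum_dAbsLen_prod_ofFn_two_mul (n : ℕ) :
    ∑ f : Fin (2 * n) → Bool, (dAbsLen m (List.ofFn fun i => dihedralGen m (f i)).prod : ℝ) =
      2 * 2 ^ (2 * n) -
        2 * ∑ w ∈ (range (2 * n + 1)).filter (fun w : ℕ => (m : ℤ) ∣ w - n),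
          ((2 * n).choose w : ℝ) := by
  simp only [prod_ofFn_dihedralGen, even_two_mul, if_true]
  rw [sum_bool_fun_alternatingSum n fun x => (dAbsLen m (r (-x)) : ℝ)]
  have hterm : ∀ w : ℕ, (dAbsLen m (r (-((w : ZMod m) - n))) : ℝ) =
      2 - 2 * if (m : ℤ) ∣ w - n then 1 else 0 := by
    intro w
    have hzero : (n : ZMod m) - w = 0 ↔ (m : ℤ) ∣ w - n := by
      rw [← neg_sub, neg_eq_zero, ← ZMod.intCast_zmod_eq_zero_iff_dvd]
      push_cast; rfl
    by_cases hdvd : (m : ℤ) ∣ w - n <;> simp [dAbsLen_r, hzero, hdvd]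
  simp only [hterm, nsmul_eq_mul, mul_sub, sum_sub_distrib, mul_ite, mul_one, mul_zero,
    ← sum_filter]
  rw [← sum_mul, ← sum_mul, ← Nat.cast_sum, Nat.sum_range_choose]
  push_cast
  ring

end Dihedral

theorem expected_abs_length_simple_reflections_dihedral (m t : ℕ) (hm : 2 ≤ m) :
    (Odd t → dihedralExpAbsLenS m t = 1) ∧
    (Even t → dihedralExpAbsLenS m t =
      2 - (1 / (2 : ℝ) ^ ((t : ℤ) - 1)) *
        ∑ k ∈ Finset.Icc (-((t / (2 * m) : ℕ) : ℤ)) ((t / (2 * m) : ℕ) : ℤ),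
          (t.choose (((t / 2 : ℕ) : ℤ) - k * m).toNat : ℝ)) := by
  refine ⟨fun ht => ?_, fun ht => ?_⟩
  · simp only [dihedralExpAbsLenS, prod_ofFn_dihedralGen, Nat.not_even_iff_odd.mpr ht, if_false,
      dAbsLen_sr, Nat.cast_one, sum_const, card_univ, Fintype.card_fun, Fintype.card_bool,
      Fintype.card_fin, nsmul_eq_mul, mul_one]
    push_cast
    exact div_self (by positivity)
  · obtain ⟨n, rfl⟩ := ht
    rw [← two_mul, Nat.mul_div_cancel_left n two_pos, Nat.mul_div_mul_left n m two_pos,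
      dihedralExpAbsLenS, sum_dAbsLen_prod_ofFn_two_mul, ← Nat.cast_sum,
      sum_choose_filter_dvd_sub (by omega), Nat.cast_sum, zpow_sub₀ two_ne_zero, zpow_natCast,
      zpow_one]
    field_simp
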